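/- For a nonnegative integer m and fixed w ∈ ℂ, the residue of the function s ↦ Γ(s)² Γ(2-s) e^{ws} at its double pole s = -m equals ((m+1)/m!) · e^{-wm} · (w + H_m - C₀ - 1/(m+1)), where H_m = ∑_{k=1}^m 1/k and C₀ is the Euler–Mascheroni constant. -/

import Mathlib

open Complex Filter Topology Finset

private lemma gamma_shift_aux (n : ℕ) (s : ℂ) (hs : ∀ k : ℕ, k < n → s + k ≠ 0) :
    Complex.Gamma (s + n) = Complex.Gamma s * ∏ k ∈ Finset.range n, (s + k) := by
  induction n with
  | zero => simp
  | succ n ih =>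
    have h1 : s + ((n+1 : ℕ) : ℂ) = (s + n) + 1 := by push_cast; ring
    rw [h1, Complex.Gamma_add_one _ (hs n (Nat.lt_succ_self n)),
      ih (fun k hk => hs k (hk.trans (Nat.lt_succ_self n))), Finset.prod_range_succ]
    ring

private lemma prod_neg_aux (m : ℕ) (g : ℕ → ℂ) :
    ∏ k ∈ Finset.range m, (-(g k)) = (-1) ^ m * ∏ k ∈ Finset.range m, g k := by
  induction m with
  | zero => simp
  | succ n ih => rw [Finset.prod_range_succ, Finset.prod_range_succ, ih, pow_succ]; ring

/-- For a nonnegative integer `m` and fixed `w ∈ ℂ`, the residue of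
`s ↦ Γ(s)² Γ(2-s) e^{ws}` at its double pole `s = -m`, computed as the limit of
`d/ds [(s+m)² Γ(s)² Γ(2-s) e^{ws}]` as `s → -m`, equals
`((m+1)/m!) e^{-wm} (w + H_m - C₀ - 1/(m+1))`, where `H_m = ∑_{k=1}^m 1/k` and
`C₀` is the Euler–Mascheroni constant. -/
theorem residue_double_pole (m : ℕ) (w : ℂ) :
    Tendsto
      (fun s : ℂ => deriv
        (fun t : ℂ => (t + (m : ℂ)) ^ 2 *
          (Complex.Gamma t ^ 2 * Complex.Gamma (2 - t) * Complex.exp (w * t))) s)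
      (𝓝[≠] (-(m : ℂ)))
      (𝓝 (((m : ℂ) + 1) / (m.factorial : ℂ) * Complex.exp (-w * m) *
        (w + (∑ k ∈ Finset.range m, (1 : ℂ) / (k + 1)) -
          (Real.eulerMascheroniConstant : ℂ) - 1 / ((m : ℂ) + 1)))) := by
  set c : ℂ := -(m : ℂ) with hc
  set f : ℂ → ℂ := fun t : ℂ => (t + (m : ℂ)) ^ 2 *
      (Complex.Gamma t ^ 2 * Complex.Gamma (2 - t) * Complex.exp (w * t)) with hf
  set F : ℂ := (m.factorial : ℂ) with hFdef
  have hF : F ≠ 0 := Nat.cast_ne_zero.2 m.factorial_ne_zero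
  set G : ℂ := (Real.eulerMascheroniConstant : ℂ) with hGdef
  set Hm : ℂ := ∑ k ∈ Finset.range m, (1 : ℂ) / (k + 1) with hHm
  set Dm : ℂ → ℂ := fun s => ∏ k ∈ Finset.range m, (s + k) with hDmdef
  set A : ℂ → ℂ := fun s => Complex.Gamma (s + ((m : ℂ) + 1)) with hAdef
  set B : ℂ → ℂ := fun s => Complex.Gamma (2 - s) with hBdef
  set E : ℂ → ℂ := fun s => Complex.exp (w * s) with hEdef
  set h : ℂ → ℂ := fun s => (A s / Dm s) ^ 2 * (B s * E s) with hhdef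
  set U : Set ℂ := Metric.ball c 1 with hUdef
  -- basic nonvanishing facts on the ball
  have hmem : ∀ s ∈ U, ∀ k : ℕ, k ≠ m → s + (k : ℂ) ≠ 0 := by
    intro s hs k hk heq
    have h1 : ‖s + (m : ℂ)‖ < 1 := by
      have h0 := Metric.mem_ball.mp hs
      rwa [Complex.dist_eq, hc, sub_neg_eq_add] at h0
    have h2 : s + (m : ℂ) = (((m : ℤ) - k : ℤ) : ℂ) := by push_cast; linear_combination heq
    rw [h2, Complex.norm_intCast] at h1
    have h4 : (1 : ℝ) ≤ |(((m : ℤ) - k : ℤ) : ℝ)| := by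
      rw [← Int.cast_abs]
      exact_mod_cast Int.one_le_abs (by omega : (m : ℤ) - k ≠ 0)
    linarith
  have hcU : c ∈ U := Metric.mem_ball_self one_pos
  have hDne : ∀ s ∈ U, Dm s ≠ 0 := by
    intro s hs
    rw [hDmdef]
    refine Finset.prod_ne_zero_iff.2 fun k hk => ?_
    exact hmem s hs k (by have := Finset.mem_range.1 hk; omega)
  have hAdiff : ∀ s ∈ U, DifferentiableAt ℂ A s := by
    intro s hs
    refine DifferentiableAt.comp s (Complex.differentiableAt_Gamma _ fun n hn => ?_)
      ((differentiableAt_id.add_const _))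
    exact hmem s hs (m + 1 + n) (by omega) (by push_cast; linear_combination hn)
  have hBdiff : ∀ s ∈ U, DifferentiableAt ℂ B s := by
    intro s hs
    refine DifferentiableAt.comp s (Complex.differentiableAt_Gamma _ fun n hn => ?_)
      ((differentiableAt_const 2).sub differentiableAt_id)
    -- 2 - s = -n impossible
    have h1 : ‖s + (m : ℂ)‖ < 1 := by
      have h0 := Metric.mem_ball.mp hs
      rwa [Complex.dist_eq, hc, sub_neg_eq_add] at h0
    have h2 : s + (m : ℂ) = ((n + 2 + m : ℕ) : ℂ) := by push_cast; linear_combination -hn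
    rw [h2, Complex.norm_natCast] at h1
    have : (1 : ℝ) ≤ (n + 2 + m : ℕ) := by exact_mod_cast Nat.one_le_iff_ne_zero.2 (by omega)
    linarith
  have hDdiff : ∀ s : ℂ, DifferentiableAt ℂ Dm s := by
    intro s
    exact (HasDerivAt.fun_finsetProd (u := Finset.range m)
      (f := fun k (t : ℂ) => t + k) (f' := fun _ => 1)
      (fun k _ => (hasDerivAt_id s).add_const _)).differentiableAt
  have hEdiff : ∀ s : ℂ, DifferentiableAt ℂ E s := fun s =>
    ((differentiableAt_id.const_mul w).cexp)
  have hhdiff : DifferentiableOn ℂ h U := by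
    intro s hs
    exact ((((hAdiff s hs).div (hDdiff s) (hDne s hs)).pow 2).mul
      ((hBdiff s hs).mul (hEdiff s))).differentiableWithinAt
  -- h is analytic on U, hence deriv h is continuous at c
  have hAnal : AnalyticOnNhd ℂ h U := hhdiff.analyticOnNhd Metric.isOpen_ball
  have hDerivCont : ContinuousAt (deriv h) c :=
    ((hAnal.deriv c hcU).continuousAt)
  -- f = h on U \ {c}
  have hVopen : IsOpen (U \ {c}) := Metric.isOpen_ball.sdiff isClosed_singleton
  have heqOn : Set.EqOn f h (U \ {c}) := by
    intro s hs
    obtain ⟨hsU, hsc⟩ := hs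
    have hsm : s + (m : ℂ) ≠ 0 := by
      intro heq
      exact hsc (by simpa using by linear_combination heq : s = c)
    have hks : ∀ k : ℕ, k < m + 1 → s + (k : ℂ) ≠ 0 := by
      intro k hk
      rcases eq_or_ne k m with rfl | hne
      · exact hsm
      · exact hmem s hsU k hne
    have hshift := gamma_shift_aux (m + 1) s hks
    have hDs : Dm s ≠ 0 := hDne s hsU
    have hAs : A s = Complex.Gamma s * (Dm s * (s + m)) := by
      simp only [hAdef, hDmdef]
      have : s + ((m : ℂ) + 1) = s + ((m + 1 : ℕ) : ℂ) := by push_cast; ring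
      rw [this, hshift, Finset.prod_range_succ]
    simp only [hhdef, hf, hAs, hBdef, hEdef]
    field_simp
  -- deriv f = deriv h on the punctured filter
  have hVmem : U \ {c} ∈ 𝓝[≠] c := diff_mem_nhdsWithin_compl (Metric.isOpen_ball.mem_nhds hcU) _
  have hderiv_eq : (fun s => deriv f s) =ᶠ[𝓝[≠] c] deriv h := by
    filter_upwards [hVmem] with s hs
    exact Filter.EventuallyEq.deriv_eq
      (Filter.eventuallyEq_of_mem (hVopen.mem_nhds hs) heqOn)
  -- values at c
  have hDmc : Dm c = (-1 : ℂ) ^ m * F := by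
    simp only [hDmdef]
    have step1 : ∀ k ∈ Finset.range m, c + (k : ℂ) = -(((m - k : ℕ) : ℂ)) := by
      intro k hk
      have hk' : k ≤ m := (Finset.mem_range.1 hk).le
      rw [Nat.cast_sub hk', hc]; ring
    rw [Finset.prod_congr rfl step1, prod_neg_aux]
    congr 1
    rw [← Nat.cast_prod, hFdef]
    congr 1
    calc ∏ k ∈ Finset.range m, (m - k)
        = ∏ k ∈ Finset.range m, ((m - 1 - k) + 1) := by
          refine Finset.prod_congr rfl fun k hk => ?_
          have := Finset.mem_range.1 hk; omega
      _ = ∏ k ∈ Finset.range m, (k + 1) := Finset.prod_range_reflect (fun j => j + 1) m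
      _ = m.factorial := Finset.prod_range_add_one_eq_factorial m
  have hDcne : Dm c ≠ 0 := hDne c hcU
  have hAc : A c = 1 := by
    simp only [hAdef]
    have : c + ((m : ℂ) + 1) = 1 := by rw [hc]; ring
    rw [this, Complex.Gamma_one]
  have hBc : B c = ((m + 1).factorial : ℂ) := by
    simp only [hBdef]
    have : 2 - c = ((m + 1 : ℕ) : ℂ) + 1 := by rw [hc]; push_cast; ring
    rw [this, Complex.Gamma_nat_eq_factorial]
  -- derivatives at c
  have hA' : HasDerivAt A (-G) c := by
    have h0 : HasDerivAt (fun s : ℂ => s + ((m : ℂ) + 1)) 1 c := (hasDerivAt_id c).add_const _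
    have h2 : c + ((m : ℂ) + 1) = 1 := by rw [hc]; ring
    have h1 : HasDerivAt Complex.Gamma (-G) (c + ((m : ℂ) + 1)) := by
      rw [h2, hGdef]; exact Complex.hasDerivAt_Gamma_one
    have := HasDerivAt.comp (x := c) h1 h0
    simpa [hAdef, Function.comp_def] using this
  have hB' : HasDerivAt B (-(((m + 1).factorial : ℂ) * (-G + ((harmonic (m + 1) : ℚ) : ℂ)))) c := by
    have h0 : HasDerivAt (fun s : ℂ => 2 - s) (-1) c := by
      simpa using (hasDerivAt_id c).const_sub (2 : ℂ)
    have h1 := Complex.hasDerivAt_Gamma_nat (m + 1)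
    have h2 : (2 : ℂ) - c = ((m + 1 : ℕ) : ℂ) + 1 := by rw [hc]; push_cast; ring
    rw [← h2] at h1
    have := HasDerivAt.comp (x := c) h1 h0
    simpa [hBdef, Function.comp_def, hGdef, mul_comm, mul_neg] using this
  have hE' : HasDerivAt E (Complex.exp (w * c) * w) c := by
    simpa [hEdef] using ((hasDerivAt_id c).const_mul w).cexp
  have hD' : HasDerivAt Dm (Dm c * (-Hm)) c := by
    have h0 := HasDerivAt.fun_finsetProd (u := Finset.range m)
      (f := fun k (t : ℂ) => t + k) (f' := fun _ => 1) (x := c)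
      (fun k _ => (hasDerivAt_id c).add_const _)
    have h1 : ∑ k ∈ Finset.range m, (∏ j ∈ (Finset.range m).erase k, (c + (j : ℂ))) • (1 : ℂ)
        = Dm c * (-Hm) := by
      simp only [smul_eq_mul, mul_one]
      have step1 : ∀ k ∈ Finset.range m,
          (∏ j ∈ (Finset.range m).erase k, (c + (j : ℂ))) = Dm c * (c + k)⁻¹ := by
        intro k hk
        have hck : c + (k : ℂ) ≠ 0 :=
          hmem c hcU k (by have := Finset.mem_range.1 hk; omega)
        have hpe := Finset.prod_erase_mul (Finset.range m) (fun j => c + (j : ℂ)) hk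
        have hDc_eq : Dm c = ∏ x ∈ Finset.range m, (c + (x : ℂ)) := rfl
        rw [hDc_eq, ← hpe, mul_inv_cancel_right₀ hck]
      rw [Finset.sum_congr rfl step1, ← Finset.mul_sum]
      congr 1
      rw [← Finset.sum_range_reflect (fun j => (c + (j : ℂ))⁻¹) m]
      rw [hHm, ← Finset.sum_neg_distrib]
      refine Finset.sum_congr rfl fun j hj => ?_
      have hj' : j + 1 ≤ m := Finset.mem_range.1 hj
      have : c + ((m - 1 - j : ℕ) : ℂ) = -((j : ℂ) + 1) := by
        have : (m - 1 - j : ℕ) = m - (j + 1) := by omega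
        rw [this, Nat.cast_sub hj', hc]; push_cast; ring
      simp only [this, one_div, inv_neg]
    rw [← h1]
    exact h0
  -- assemble the derivative of h at c
  have hq := hA'.fun_div hD' hDcne
  have hh' := (hq.fun_pow 2).fun_mul (hB'.fun_mul hE')
  have hm1 : ((m : ℂ) + 1) ≠ 0 := Nat.cast_add_one_ne_zero m
  have hHc1 : ((harmonic (m + 1) : ℚ) : ℂ) = Hm + 1 / ((m : ℂ) + 1) := by
    rw [harmonic, hHm]
    push_cast
    rw [Finset.sum_range_succ]
    simp [one_div]
  have hfact : (((m + 1).factorial : ℕ) : ℂ) = ((m : ℂ) + 1) * F := by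
    rw [Nat.factorial_succ, hFdef]; push_cast; ring
  have hexp : Complex.exp (-w * (m : ℂ)) = E c := by
    rw [hEdef, hc]; congr 1; ring
  have hval : deriv h c = ((m : ℂ) + 1) / F * Complex.exp (-w * (m : ℂ)) *
      (w + Hm - G - 1 / ((m : ℂ) + 1)) := by
    rw [hh'.deriv, hexp, hAc, hBc, hHc1, hfact]
    have hEne : E c ≠ 0 := Complex.exp_ne_zero _
    rcases Nat.even_or_odd m with he | ho
    · rw [hDmc, he.neg_one_pow]
      field_simp
      simp only [mul_inv_cancel₀ hF, show Complex.exp (w * c) = E c from rfl]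
      linear_combination (2 * (Hm * (m : ℂ) * E c + Hm * E c - G * (m : ℂ) * E c - G * E c)) *
        (mul_inv_cancel₀ hF)
    · rw [hDmc, ho.neg_one_pow]
      field_simp
      simp only [mul_inv_cancel₀ hF, show Complex.exp (w * c) = E c from rfl]
      linear_combination (2 * (Hm * (m : ℂ) * E c + Hm * E c - G * (m : ℂ) * E c - G * E c)) *
        (mul_inv_cancel₀ hF)
  refine Tendsto.congr' hderiv_eq.symm ?_
  rw [← hval]
  exact hDerivCont.tendsto.mono_left nhdsWithin_le_nhds
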